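/- Let T*_0, T*_1 be classifiers with T*_1 ⊆ T*_0, and let T be a classifier with T*_1 ⊆ T ⊆ T*_0. If ∫_{T*_0 \ T} f_{0,1} dν > 0 and ∫_{T \ T*_1} f_{1,1} dν > 0, then the model unfairness is strictly positive: F_MU(T) > 0; indeed already its true-positive-rate component (1/2)|(TPR_0(T) − TPR_0(T*_0)) − (TPR_1(T) − TPR_1(T*_1))| is strictly positive. -/

import Mathlib

open MeasureTheory

/-- True positive rate of group `a` under classifier `T`: `TPR_a(T) = ∫_T f_{a,1} dν`. -/
noncomputable def tprOf {Ω : Type*} [MeasurableSpace Ω] (ν : Measure Ω)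
    (f : Bool → Bool → Ω → ℝ) (a : Bool) (T : Set Ω) : ℝ :=
  ∫ x in T, f a true x ∂ν

/-- True negative rate of group `a` under classifier `T`: `TNR_a(T) = ∫_{Tᶜ} f_{a,0} dν`. -/
noncomputable def tnrOf {Ω : Type*} [MeasurableSpace Ω] (ν : Measure Ω)
    (f : Bool → Bool → Ω → ℝ) (a : Bool) (T : Set Ω) : ℝ :=
  ∫ x in Tᶜ, f a false x ∂ν

/-- Model unfairness of `T` relative to reference classifiers `T*_0, T*_1`. -/
noncomputable def modelUnfairness {Ω : Type*} [MeasurableSpace Ω] (ν : Measure Ω)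
    (f : Bool → Bool → Ω → ℝ) (T0 T1 T : Set Ω) : ℝ :=
  (1/2) * |(tprOf ν f false T - tprOf ν f false T0)
      - (tprOf ν f true T - tprOf ν f true T1)|
    + (1/2) * |(tnrOf ν f false T - tnrOf ν f false T0)
      - (tnrOf ν f true T - tnrOf ν f true T1)|

/-!
Since `T*_1 ⊆ T ⊆ T*_0`, the two TPR changes are integrals over the "slices"
`T*_0 \ T` and `T \ T*_1`: group 0 loses `∫_{T*_0 \ T} f₀₁`, group 1 gains
`∫_{T \ T*_1} f₁₁`. The TPR disparity is minus the sum of these positive integrals,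
hence nonzero, and the TNR component of the model unfairness is nonnegative.
-/

section

variable {Ω : Type*} [MeasurableSpace Ω] {ν : Measure Ω} {f : Bool → Bool → Ω → ℝ}

theorem tprOf_sub_tprOf_of_subset {a : Bool} {S S' : Set Ω} (hS : MeasurableSet S)
    (hSS' : S ⊆ S') (hf : Integrable (f a true) ν) :
    tprOf ν f a S' - tprOf ν f a S = ∫ x in S' \ S, f a true x ∂ν :=
  (setIntegral_sdiff hS hf.integrableOn hSS').symm

theorem tpr_component_le_modelUnfairness (T0 T1 T : Set Ω) :
    (1/2) * |(tprOf ν f false T - tprOf ν f false T0)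
        - (tprOf ν f true T - tprOf ν f true T1)| ≤ modelUnfairness ν f T0 T1 T :=
  le_add_of_nonneg_right (by positivity)

end

theorem model_unfairness_strictly_positive_general
    {Ω : Type*} [MeasurableSpace Ω] (ν : Measure Ω)
    (f : Bool → Bool → Ω → ℝ)
    (hf_int : ∀ a y, Integrable (f a y) ν)
    (T0 T1 : Set Ω) (hT1 : MeasurableSet T1)
    (T : Set Ω) (hT : MeasurableSet T) (hT1T : T1 ⊆ T) (hTT0 : T ⊆ T0)
    (hpos1 : 0 < ∫ x in T0 \ T, f false true x ∂ν)
    (hpos2 : 0 < ∫ x in T \ T1, f true true x ∂ν) :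
    0 < (1/2) * |(tprOf ν f false T - tprOf ν f false T0)
        - (tprOf ν f true T - tprOf ν f true T1)| ∧
      0 < modelUnfairness ν f T0 T1 T := by
  have hloss := tprOf_sub_tprOf_of_subset hT hTT0 (hf_int false true)
  have hgain := tprOf_sub_tprOf_of_subset hT1 hT1T (hf_int true true)
  have hdisparity : (tprOf ν f false T - tprOf ν f false T0)
      - (tprOf ν f true T - tprOf ν f true T1) < 0 := by
    linarith
  have htpr := mul_pos one_half_pos (abs_pos.mpr hdisparity.ne)
  exact ⟨htpr, htpr.trans_le (tpr_component_le_modelUnfairness T0 T1 T)⟩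

/-- If `T*_1 ⊆ T ⊆ T*_0` and the integrals `∫_{T*_0 \ T} f₀₁ dν` and
`∫_{T \ T*_1} f₁₁ dν` are strictly positive, then the model unfairness of `T` is
strictly positive, and indeed already its TPR component is strictly positive. -/
theorem model_unfairness_strictly_positive
    {Ω : Type*} [MeasurableSpace Ω] (ν : Measure Ω) [SigmaFinite ν]
    (f : Bool → Bool → Ω → ℝ)
    (hf_meas : ∀ a y, Measurable (f a y))
    (hf_nonneg : ∀ a y x, 0 ≤ f a y x)
    (hf_int : ∀ a y, Integrable (f a y) ν)
    (hf_one : ∀ a y, ∫ x, f a y x ∂ν = 1)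
    (T0 T1 : Set Ω) (hT0 : MeasurableSet T0) (hT1 : MeasurableSet T1)
    (hsub : T1 ⊆ T0)
    (T : Set Ω) (hT : MeasurableSet T) (hT1T : T1 ⊆ T) (hTT0 : T ⊆ T0)
    (hpos1 : 0 < ∫ x in T0 \ T, f false true x ∂ν)
    (hpos2 : 0 < ∫ x in T \ T1, f true true x ∂ν) :
    0 < (1/2) * |(tprOf ν f false T - tprOf ν f false T0)
        - (tprOf ν f true T - tprOf ν f true T1)| ∧
      0 < modelUnfairness ν f T0 T1 T :=
  model_unfairness_strictly_positive_general ν f hf_int T0 T1 hT1 T hT hT1T hTT0 hpos1 hpos2
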